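/- Extending scope of universal quantifier over disjunction (rule 3): ∀x((φ ∧ y ⊥ x) ∨ ψ) is logically equivalent to (∀x φ) ∨ ψ, provided x does not occur free in ψ and y is a tuple listing all the variables in Fr(φ ∨ ψ) \ {x}. -/

import Mathlib

open FirstOrder Language

/-- Formulas of independence logic over a first-order language `L`, with variables `ℕ`:
first-order formulas, conditional independence atoms `t1 ⊥_{t3} t2` (written
`indep t1 t2 t3`) between tuples (lists) of terms, conjunction, disjunction, and
existential and universal quantification. -/
inductive TeamFormula (L : Language) : Type _ where
  | fo (φ : L.Formula ℕ)
  | indep (t1 t2 t3 : List (L.Term ℕ))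
  | and (φ ψ : TeamFormula L)
  | or (φ ψ : TeamFormula L)
  | ex (x : ℕ) (φ : TeamFormula L)
  | all (x : ℕ) (φ : TeamFormula L)

namespace TeamFormula

variable {L : Language}

/-- The set of free variables of an independence-logic formula. -/
def Fr : TeamFormula L → Set ℕ
  | .fo φ => ↑φ.freeVarFinset
  | .indep t1 t2 t3 => ↑((t1 ++ t2 ++ t3).foldr (fun t s => t.varFinset ∪ s) ∅)
  | .and φ ψ => φ.Fr ∪ ψ.Fr
  | .or φ ψ => φ.Fr ∪ ψ.Fr
  | .ex x φ => φ.Fr \ {x}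
  | .all x φ => φ.Fr \ {x}

/-- A team is a set of assignments. -/
abbrev Team (M : Type*) := Set (ℕ → M)

/-- The value of a tuple (list) of terms under an assignment. -/
def listVal {M : Type*} [L.Structure M] (ts : List (L.Term ℕ)) (s : ℕ → M) : List M :=
  ts.map fun t => t.realize s

/-- Lax team semantics for independence logic.  First-order formulas are evaluated
pointwise; disjunction splits the team into a union; `∃x φ` is witnessed by a function
`F` from the team to nonempty sets of elements, extending the team to
`X(F/x) = {s(a/x) : s ∈ X, a ∈ F s}`; `∀x φ` duplicates the team to `X(M/x)`. -/
def Sat (M : Type*) [L.Structure M] : TeamFormula L → Team M → Prop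
  | .fo φ, X => ∀ s ∈ X, φ.Realize s
  | .indep t1 t2 t3, X => ∀ s ∈ X, ∀ s' ∈ X, listVal t3 s = listVal t3 s' →
      ∃ s'' ∈ X, listVal t1 s'' = listVal t1 s ∧ listVal t3 s'' = listVal t3 s ∧
        listVal t2 s'' = listVal t2 s'
  | .and φ ψ, X => φ.Sat M X ∧ ψ.Sat M X
  | .or φ ψ, X => ∃ Y Z : Team M, Y ∪ Z = X ∧ φ.Sat M Y ∧ ψ.Sat M Z
  | .ex x φ, X => ∃ F : (ℕ → M) → Set M, (∀ s ∈ X, (F s).Nonempty) ∧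
      φ.Sat M {s' | ∃ s ∈ X, ∃ a ∈ F s, s' = Function.update s x a}
  | .all x φ, X => φ.Sat M {s' | ∃ s ∈ X, ∃ a : M, s' = Function.update s x a}

end TeamFormula

/-! Right to left: duplicating both halves of a split of `X` works, since the duplicate of a team
satisfies `y ⊥ x` when `x ∉ y`, and `ψ` cannot see `x`. Left to right: take a split `Y ∪ Z` of
`X(M/x)`. If no `x`-fibre lies entirely in `Y`, then `Z` meets every fibre, so `X` agrees with `Z`
off `x` and satisfies `ψ`, while `∀x φ` holds in the empty team. Otherwise `y ⊥ x` makes `Y` agree,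
on `Fr φ ⊆ y ∪ {x}`, with the duplicate of the part of `X` under `Y`; the part under `Z` satisfies
`ψ`. Both cases rest on locality: satisfaction depends only on the restriction of the team to the
free variables. -/

open Set Function

namespace FirstOrder.Language

variable {L : Language} {M α : Type*} [L.Structure M] [DecidableEq α] {s s' : α → M}

theorem Term.realize_congr {t : L.Term α} (h : EqOn s s' t.varFinset) :
    t.realize s = t.realize s' :=
  (realize_restrictVar (f := id) (v := s ∘ Subtype.val) s fun _ => rfl).symm.trans
    (realize_restrictVar (f := id) s' fun a => h a.2)

theorem Formula.realize_congr {φ : L.Formula α} (h : EqOn s s' φ.freeVarFinset) :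
    φ.Realize s ↔ φ.Realize s' :=
  (BoundedFormula.realize_restrictFreeVar (f := id) (v := s ∘ Subtype.val) s
    fun _ => rfl).symm.trans (BoundedFormula.realize_restrictFreeVar (f := id) s' fun a => h a.2)

end FirstOrder.Language

namespace TeamFormula

variable {L : Language} {M : Type*} [L.Structure M]

theorem eqOn_update {V : Set ℕ} {s s' : ℕ → M} (x : ℕ) (a : M) (h : EqOn s s' V) :
    EqOn (update s x a) (update s' x a) (insert x V) := by
  intro v hv
  rcases eq_or_ne v x with rfl | hne
  · simp
  · simp [update_of_ne hne, h (hv.resolve_left hne)]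

theorem listVal_congr {V : Set ℕ} {ts : List (L.Term ℕ)}
    (hts : ∀ t ∈ ts, (t.varFinset : Set ℕ) ⊆ V) {s s' : ℕ → M} (h : EqOn s s' V) :
    listVal ts s = listVal ts s' :=
  List.map_congr_left fun t ht => Term.realize_congr (h.mono (hts t ht))

theorem listVal_map_var (y : List ℕ) (s : ℕ → M) :
    listVal (y.map (Term.var : ℕ → L.Term ℕ)) s = y.map s := by
  simp [listVal]

theorem varFinset_subset_Fr_indep {t1 t2 t3 : List (L.Term ℕ)} :
    ∀ t ∈ t1 ++ t2 ++ t3, (t.varFinset : Set ℕ) ⊆ (indep t1 t2 t3).Fr := by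
  simp only [Fr]
  induction t1 ++ t2 ++ t3 with
  | nil => simp
  | cons u ts ih =>
    simp only [List.mem_cons, forall_eq_or_imp, List.foldr_cons]
    exact ⟨subset_union_left, fun t ht => (ih t ht).trans subset_union_right⟩

/-- `X(M/x)`. -/
def duplicate (x : ℕ) (X : Team M) : Team M :=
  {s' | ∃ s ∈ X, ∃ a : M, s' = update s x a}

/-- `X(F/x)`. -/
def supplement (x : ℕ) (X : Team M) (F : (ℕ → M) → Set M) : Team M :=
  {s' | ∃ s ∈ X, ∃ a ∈ F s, s' = update s x a}

/-- `X ↾ V = X' ↾ V`. -/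
def AgreeOn (V : Set ℕ) (X X' : Team M) : Prop :=
  (∀ s ∈ X, ∃ s' ∈ X', EqOn s s' V) ∧ ∀ s' ∈ X', ∃ s ∈ X, EqOn s s' V

namespace AgreeOn

variable {V : Set ℕ} {X X' : Team M}

theorem symm (h : AgreeOn V X X') : AgreeOn V X' X :=
  ⟨fun s' hs' => (h.2 s' hs').imp fun _ ⟨hs, he⟩ => ⟨hs, he.symm⟩,
    fun s hs => (h.1 s hs).imp fun _ ⟨hs', he⟩ => ⟨hs', he.symm⟩⟩

theorem exists_union_eq (h : AgreeOn V X X') {Y Z : Team M} (hYZ : Y ∪ Z = X) :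
    ∃ Y' Z' : Team M, Y' ∪ Z' = X' ∧ AgreeOn V Y Y' ∧ AgreeOn V Z Z' := by
  have restrict : ∀ W ⊆ X, AgreeOn V W {s' ∈ X' | ∃ s ∈ W, EqOn s s' V} := fun W hW =>
    ⟨fun s hs => (h.1 s (hW hs)).imp fun s' ⟨hs', he⟩ => ⟨⟨hs', s, hs, he⟩, he⟩,
      fun _ ⟨_, hs⟩ => hs⟩
  refine ⟨_, _, ?_, restrict Y (hYZ ▸ subset_union_left), restrict Z (hYZ ▸ subset_union_right)⟩
  ext s'
  refine ⟨fun hs' => hs'.elim And.left And.left, fun hs' => ?_⟩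
  obtain ⟨s, hs, he⟩ := h.2 s' hs'
  rcases hYZ ▸ hs with hs | hs
  exacts [Or.inl ⟨hs', s, hs, he⟩, Or.inr ⟨hs', s, hs, he⟩]

theorem duplicate (h : AgreeOn V X X') (x : ℕ) :
    AgreeOn (insert x V) (duplicate x X) (duplicate x X') := by
  constructor
  · rintro _ ⟨s, hs, a, rfl⟩
    obtain ⟨s', hs', he⟩ := h.1 s hs
    exact ⟨_, ⟨s', hs', a, rfl⟩, eqOn_update x a he⟩
  · rintro _ ⟨s', hs', a, rfl⟩
    obtain ⟨s, hs, he⟩ := h.2 s' hs'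
    exact ⟨_, ⟨s, hs, a, rfl⟩, eqOn_update x a he⟩

/-- The new witness collects the witnesses of all `V`-copies of an assignment. -/
theorem exists_supplement (h : AgreeOn V X X') (x : ℕ) {F : (ℕ → M) → Set M}
    (hF : ∀ s ∈ X, (F s).Nonempty) :
    ∃ F' : (ℕ → M) → Set M, (∀ s' ∈ X', (F' s').Nonempty) ∧
      AgreeOn (insert x V) (supplement x X F) (supplement x X' F') := by
  refine ⟨fun s' => ⋃ s ∈ {s ∈ X | EqOn s s' V}, F s, fun s' hs' => ?_, ?_, ?_⟩
  · obtain ⟨s, hs, he⟩ := h.2 s' hs'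
    exact (hF s hs).mono (subset_biUnion_of_mem (u := F) ⟨hs, he⟩)
  · rintro _ ⟨s, hs, a, ha, rfl⟩
    obtain ⟨s', hs', he⟩ := h.1 s hs
    exact ⟨_, ⟨s', hs', a, mem_biUnion ⟨hs, he⟩ ha, rfl⟩, eqOn_update x a he⟩
  · rintro _ ⟨s', hs', a, ha, rfl⟩
    obtain ⟨s, ⟨hs, he⟩, ha⟩ := mem_iUnion₂.mp ha
    exact ⟨_, ⟨s, hs, a, ha, rfl⟩, eqOn_update x a he⟩

end AgreeOn

theorem sat_indep_of_agreeOn {t1 t2 t3 : List (L.Term ℕ)} {V : Set ℕ} {X X' : Team M}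
    (hV : (indep t1 t2 t3).Fr ⊆ V) (h : AgreeOn V X X') (hX : (indep t1 t2 t3).Sat M X) :
    (indep t1 t2 t3).Sat M X' := by
  have hval {ts} (hts : ts ⊆ t1 ++ t2 ++ t3) {s s' : ℕ → M} (he : EqOn s s' V) :
      listVal ts s = listVal ts s' :=
    listVal_congr (fun t ht => (varFinset_subset_Fr_indep t (hts ht)).trans hV) he
  have e1 := @hval t1 (by simp)
  have e2 := @hval t2 (by simp)
  have e3 := @hval t3 (by simp)
  intro s' hs' r' hr' h3
  obtain ⟨s, hs, hss'⟩ := h.2 s' hs'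
  obtain ⟨r, hr, hrr'⟩ := h.2 r' hr'
  obtain ⟨u, hu, hu1, hu3, hu2⟩ := hX s hs r hr (by rw [e3 hss', e3 hrr', h3])
  obtain ⟨u', hu', huu'⟩ := h.1 u hu
  exact ⟨u', hu', by rw [← e1 huu', hu1, e1 hss'], by rw [← e3 huu', hu3, e3 hss'],
    by rw [← e2 huu', hu2, e2 hrr']⟩

theorem sat_of_agreeOn (φ : TeamFormula L) {V : Set ℕ} {X X' : Team M} (hV : φ.Fr ⊆ V)
    (h : AgreeOn V X X') (hX : φ.Sat M X) : φ.Sat M X' := by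
  induction φ generalizing V X X' with
  | fo φ =>
    intro s' hs'
    obtain ⟨s, hs, he⟩ := h.2 s' hs'
    exact (Formula.realize_congr (he.mono hV)).1 (hX s hs)
  | indep t1 t2 t3 => exact sat_indep_of_agreeOn hV h hX
  | and φ ψ ihφ ihψ =>
    exact ⟨ihφ (subset_union_left.trans hV) h hX.1, ihψ (subset_union_right.trans hV) h hX.2⟩
  | or φ ψ ihφ ihψ =>
    obtain ⟨Y, Z, hYZ, hY, hZ⟩ := hX
    obtain ⟨Y', Z', hYZ', hYY', hZZ'⟩ := h.exists_union_eq hYZ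
    exact ⟨Y', Z', hYZ', ihφ (subset_union_left.trans hV) hYY' hY,
      ihψ (subset_union_right.trans hV) hZZ' hZ⟩
  | ex x φ ih =>
    obtain ⟨F, hF, hXF⟩ := hX
    obtain ⟨F', hF', hF'X⟩ := h.exists_supplement x hF
    exact ⟨F', hF', ih (insert_eq x V ▸ sdiff_subset_iff.1 hV) hF'X hXF⟩
  | all x φ ih => exact ih (insert_eq x V ▸ sdiff_subset_iff.1 hV) (h.duplicate x) hX

theorem sat_congr (φ : TeamFormula L) {V : Set ℕ} {X X' : Team M} (hV : φ.Fr ⊆ V)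
    (h : AgreeOn V X X') : φ.Sat M X ↔ φ.Sat M X' :=
  ⟨sat_of_agreeOn φ hV h, sat_of_agreeOn φ hV h.symm⟩

theorem sat_empty (φ : TeamFormula L) : φ.Sat M ∅ := by
  induction φ with
  | fo | indep => rintro _ ⟨⟩
  | and φ ψ ihφ ihψ => exact ⟨ihφ, ihψ⟩
  | or φ ψ ihφ ihψ => exact ⟨∅, ∅, union_empty ∅, ihφ, ihψ⟩
  | ex x φ ih => exact ⟨fun _ => ∅, by simp, by simpa [supplement] using ih⟩
  | all x φ ih => simpa [Sat, duplicate] using ih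

theorem duplicate_union (x : ℕ) (Y Z : Team M) :
    duplicate x (Y ∪ Z) = duplicate x Y ∪ duplicate x Z := by
  ext s'
  simp only [duplicate, mem_union, mem_ofPred_eq, or_and_right, exists_or]

theorem agreeOn_duplicate (x : ℕ) (X : Team M) : AgreeOn {x}ᶜ (duplicate x X) X :=
  ⟨fun _ ⟨s, hs, a, he⟩ => ⟨s, hs, he ▸ fun _ hv => update_of_ne hv a s⟩,
    fun s hs => ⟨s, ⟨s, hs, s x, (update_eq_self x s).symm⟩, fun _ _ => rfl⟩⟩

theorem sat_duplicate_iff {φ : TeamFormula L} {x : ℕ} (hx : x ∉ φ.Fr) {X : Team M} :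
    φ.Sat M (duplicate x X) ↔ φ.Sat M X :=
  sat_congr φ (subset_compl_singleton_iff.2 hx) (agreeOn_duplicate x X)

theorem sat_indep_duplicate {x : ℕ} {y : List ℕ} (hx : x ∉ y) (X : Team M) :
    (indep (y.map (Term.var : ℕ → L.Term ℕ)) [Term.var x] []).Sat M (duplicate x X) := by
  rintro _ ⟨s, hs, a, rfl⟩ _ ⟨-, -, b, rfl⟩ -
  refine ⟨update s x b, ⟨s, hs, b, rfl⟩, ?_, rfl, by simp [listVal]⟩
  simp only [listVal_map_var, List.map_inj_left]
  exact fun v hv => by rw [update_of_ne (ne_of_mem_of_not_mem hv hx),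
    update_of_ne (ne_of_mem_of_not_mem hv hx)]

def fiberBase (x : ℕ) (X Y : Team M) : Team M :=
  {s ∈ X | ∃ a : M, update s x a ∈ Y}

theorem fiberBase_union_fiberBase {x : ℕ} {X Y Z : Team M} (h : Y ∪ Z = duplicate x X) :
    fiberBase x X Y ∪ fiberBase x X Z = X := by
  refine subset_antisymm (union_subset (sep_subset _ _) (sep_subset _ _)) fun s hs => ?_
  have hs' : update s x (s x) ∈ Y ∪ Z := h ▸ ⟨s, hs, s x, rfl⟩
  exact hs'.imp (fun hY => ⟨hs, _, hY⟩) (fun hZ => ⟨hs, _, hZ⟩)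

theorem agreeOn_fiberBase {x : ℕ} {X Z : Team M} (h : Z ⊆ duplicate x X) :
    AgreeOn {x}ᶜ Z (fiberBase x X Z) := by
  constructor
  · intro t ht
    obtain ⟨s, hs, a, rfl⟩ := h ht
    exact ⟨s, ⟨hs, a, ht⟩, fun _ hv => update_of_ne hv a s⟩
  · rintro s ⟨-, a, ha⟩
    exact ⟨_, ha, fun _ hv => update_of_ne hv a s⟩

/-- Applying `y ⊥ x` against the full fibre of `s₀` supplies every value of `x` to every
`y`-profile occurring in `Y`. -/
theorem agreeOn_duplicate_fiberBase {x : ℕ} {y : List ℕ} {X Y : Team M} {s₀ : ℕ → M}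
    (hYX : Y ⊆ duplicate x X)
    (hind : (indep (y.map (Term.var : ℕ → L.Term ℕ)) [Term.var x] []).Sat M Y)
    (hs₀ : ∀ a, update s₀ x a ∈ Y) :
    AgreeOn (insert x {v | v ∈ y}) Y (duplicate x (fiberBase x X Y)) := by
  constructor
  · intro t ht
    obtain ⟨s, hs, a, rfl⟩ := hYX ht
    exact ⟨_, ⟨s, ⟨hs, a, ht⟩, a, rfl⟩, fun _ _ => rfl⟩
  · rintro _ ⟨s, ⟨-, a, ha⟩, b, rfl⟩
    obtain ⟨u, hu, huy, -, hux⟩ := hind _ ha _ (hs₀ b) rfl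
    simp only [listVal_map_var, List.map_inj_left] at huy
    refine ⟨u, hu, ?_⟩
    intro v hv
    rcases eq_or_ne v x with rfl | hne
    · simpa [listVal] using hux
    · rw [huy v (hv.resolve_left hne), update_of_ne hne, update_of_ne hne]

theorem sat_all_or_of_union_eq {φ ψ : TeamFormula L} {x : ℕ} {y : List ℕ} {X Y Z : Team M}
    (hψ : x ∉ ψ.Fr) (hφ : φ.Fr ⊆ insert x {v | v ∈ y}) (hYZ : Y ∪ Z = duplicate x X)
    (hY : φ.Sat M Y)
    (hind : (indep (y.map (Term.var : ℕ → L.Term ℕ)) [Term.var x] []).Sat M Y)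
    (hZ : ψ.Sat M Z) :
    ((all x φ).or ψ).Sat M X := by
  have hZψ := (sat_congr ψ (subset_compl_singleton_iff.2 hψ)
    (agreeOn_fiberBase (hYZ ▸ subset_union_right))).1 hZ
  by_cases hfull : ∃ s₀, ∀ a, update s₀ x a ∈ Y
  · obtain ⟨s₀, hs₀⟩ := hfull
    exact ⟨_, _, fiberBase_union_fiberBase hYZ, (sat_congr φ hφ
      (agreeOn_duplicate_fiberBase (hYZ ▸ subset_union_left) hind hs₀)).1 hY, hZψ⟩
  · push Not at hfull
    have hXZ : fiberBase x X Z = X := by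
      refine subset_antisymm (sep_subset _ _) fun s hs => ?_
      obtain ⟨a, ha⟩ := hfull s
      have hs' : update s x a ∈ Y ∪ Z := hYZ ▸ ⟨s, hs, a, rfl⟩
      exact ⟨hs, a, hs'.resolve_left ha⟩
    exact ⟨∅, X, empty_union X, by simpa [Sat, duplicate] using sat_empty φ, hXZ ▸ hZψ⟩

end TeamFormula

/-- extending the scope of a universal quantifier over a disjunction
(rule 3): `∀x((φ ∧ y ⊥ x) ∨ ψ)` is logically equivalent to `(∀x φ) ∨ ψ`, provided `x`
does not occur free in `ψ` and `y` is a tuple listing all the variables in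
`Fr(φ ∨ ψ) \ {x}`. -/
theorem TeamFormula.extend_scope_forall_or {L : Language} {M : Type*} [L.Structure M]
    (φ ψ : TeamFormula L) (x : ℕ) (y : List ℕ)
    (hx : x ∉ ψ.Fr)
    (hy : (↑y.toFinset : Set ℕ) = (φ.or ψ).Fr \ {x}) :
    ∀ X : TeamFormula.Team M,
      (TeamFormula.all x ((φ.and
          (TeamFormula.indep (y.map Term.var) [Term.var x] [])).or ψ)).Sat M X ↔
      ((TeamFormula.all x φ).or ψ).Sat M X := by
  have hy' : {v | v ∈ y} = (φ.or ψ).Fr \ {x} := by simpa using hy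
  have hxy : x ∉ y := fun h => (hy'.subset h).2 rfl
  have hφ : φ.Fr ⊆ insert x {v | v ∈ y} := by
    rw [hy', insert_sdiff_singleton]
    exact subset_union_left.trans (subset_insert x _)
  intro X
  constructor
  · rintro ⟨Y, Z, hYZ, ⟨hY, hind⟩, hZ⟩
    exact sat_all_or_of_union_eq hx hφ hYZ hY hind hZ
  · rintro ⟨Y, Z, rfl, hY, hZ⟩
    exact ⟨_, _, (duplicate_union x Y Z).symm, ⟨hY, sat_indep_duplicate hxy Y⟩,
      (sat_duplicate_iff hx).2 hZ⟩
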